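/- Let f be a non-autonomous dynamical system on a compact metric space M such that the family (f_i)_{i∈ℤ} is uniformly equicontinuous, and fix n ≥ 1. Define the gathering f̃ by f̃_i = f_{n(i+1)-1} ∘ ⋯ ∘ f_{ni+1} ∘ f_{ni} for each i ∈ ℤ. Then H_i(f̃) = n · H_{ni}(f) for every i ∈ ℤ. -/

import Mathlib

open Filter Topology Set

variable {M : Type*} {N : Type*}

/-- The `n`-th composition `f_i^n = f_{i+n-1} ∘ ⋯ ∘ f_i` of a non-autonomous
dynamical system `f = (f_i)_{i ∈ ℤ}` of homeomorphisms of `M`. -/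
def nsIter [TopologicalSpace M] (f : ℤ → M ≃ₜ M) (i : ℤ) : ℕ → M → M
  | 0 => id
  | n + 1 => (f (i + n)) ∘ nsIter f i n

/-- `K` is an `(n, ε)`-spanning set for `f` at time `i`. -/
def IsSpanningSet [PseudoMetricSpace M] (f : ℤ → M ≃ₜ M) (i : ℤ) (n : ℕ) (ε : ℝ)
    (K : Set M) : Prop :=
  ∀ x : M, ∃ y ∈ K, ∀ j < n, dist (nsIter f i j x) (nsIter f i j y) < ε

/-- `E` is an `(n, ε)`-separated set for `f` at time `i`. -/
def IsSeparatedSet [PseudoMetricSpace M] (f : ℤ → M ≃ₜ M) (i : ℤ) (n : ℕ) (ε : ℝ)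
    (E : Set M) : Prop :=
  ∀ x ∈ E, ∀ y ∈ E, x ≠ y → ∃ j < n, ε < dist (nsIter f i j x) (nsIter f i j y)

/-- `r[n,i](ε,f)`: the smallest cardinality of a finite `(n, ε)`-spanning set at time `i`. -/
noncomputable def rSpan [PseudoMetricSpace M] (f : ℤ → M ≃ₜ M) (i : ℤ) (n : ℕ) (ε : ℝ) : ℕ :=
  sInf {k | ∃ K : Finset M, K.card = k ∧ IsSpanningSet f i n ε ↑K}

/-- `s[n,i](ε,f)`: the largest cardinality of an `(n, ε)`-separated set at time `i`. -/
noncomputable def sSep [PseudoMetricSpace M] (f : ℤ → M ≃ₜ M) (i : ℤ) (n : ℕ) (ε : ℝ) : ℕ :=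
  sSup {k | ∃ E : Finset M, E.card = k ∧ IsSeparatedSet f i n ε ↑E}

/-- `r[i](ε,f) = limsup_{n → ∞} (1/n) log r[n,i](ε,f)`. -/
noncomputable def rGrowth [PseudoMetricSpace M] (f : ℤ → M ≃ₜ M) (i : ℤ) (ε : ℝ) : EReal :=
  Filter.atTop.limsup fun n : ℕ => ((Real.log (rSpan f i n ε) / n : ℝ) : EReal)

/-- `s[i](ε,f) = limsup_{n → ∞} (1/n) log s[n,i](ε,f)`. -/
noncomputable def sGrowth [PseudoMetricSpace M] (f : ℤ → M ≃ₜ M) (i : ℤ) (ε : ℝ) : EReal :=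
  Filter.atTop.limsup fun n : ℕ => ((Real.log (sSep f i n ε) / n : ℝ) : EReal)

/-- The topological entropy `H_i(f) = lim_{ε → 0⁺} r[i](ε,f)`; since `ε ↦ r[i](ε,f)` is
antitone, this one-sided limit equals the supremum over `ε > 0`. -/
noncomputable def nsEntropy [PseudoMetricSpace M] (f : ℤ → M ≃ₜ M) (i : ℤ) : EReal :=
  ⨆ (ε : ℝ) (_ : 0 < ε), rGrowth f i ε

/-!
The orbit of the gathering `g` from time `i` is the orbit of `f` from time `n * i` sampled every
`n` steps. Hence an `(n * m, ε)`-spanning set for `f` is `(m, ε)`-spanning for `g`; conversely,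
uniform equicontinuity yields `δ` such that `δ`-close points stay `ε`-close for the next `n - 1`
maps `f_j`, so an `(m, δ)`-spanning set for `g` is `(n * m, ε)`-spanning for `f`. Since
`k ↦ r[k, n i](ε, f)` is monotone, its exponential growth rate along the multiples `k = n * m` is
its full growth rate, and measuring it per step of `g` multiplies it by `n`.
-/

theorem tendsto_natCast_mul_div_add_one_div {n : ℕ} (hn : 0 < n) :
    Tendsto (fun k : ℕ => ((n * (k / n + 1) : ℕ) : ℝ) / k) atTop (𝓝 1) := by
  have upper : Tendsto (fun k : ℕ => 1 + (n : ℝ) / k) atTop (𝓝 1) := by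
    simpa using tendsto_const_nhds.add (tendsto_const_div_atTop_nhds_zero_nat (n : ℝ))
  refine tendsto_of_tendsto_of_tendsto_of_le_of_le' tendsto_const_nhds upper ?_ ?_ <;>
    filter_upwards [eventually_gt_atTop 0] with k hk
  · rw [le_div_iff₀ (by positivity), one_mul]
    exact_mod_cast (Nat.lt_mul_div_succ k hn).le
  · rw [div_le_iff₀ (by positivity), add_mul, one_mul, div_mul_cancel₀ _ (by positivity)]
    have : n * (k / n + 1) ≤ k + n := by
      rw [mul_add, mul_one]
      exact Nat.add_le_add_right (Nat.mul_div_le k n) n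
    exact_mod_cast this

theorem limsup_div_comp_mul_eq_limsup_div {a : ℕ → ℝ} (ha : Monotone a) (h0 : 0 ≤ a) {n : ℕ}
    (hn : 0 < n) :
    limsup (fun m : ℕ => ((a (n * m) / (n * m : ℕ) : ℝ) : EReal)) atTop
      = limsup (fun k : ℕ => ((a k / k : ℝ) : EReal)) atTop := by
  set c : ℕ → EReal := fun k => ((a k / k : ℝ) : EReal)
  have hmul : Tendsto (n * ·) atTop atTop := tendsto_id.const_mul_atTop' hn
  refine le_antisymm (hmul.limsup_comp_le_limsup (u := c)) ?_
  -- Replace `k` by the next multiple `φ k` of `n`: `a` grows, and `φ k / k → 1`.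
  set φ : ℕ → ℕ := fun k => n * (k / n + 1)
  set r : ℕ → ℝ := fun k => (φ k : ℝ) / k
  have hc : ∀ k, c k ≤ c (φ k) * (r k : EReal) := by
    intro k
    rcases k.eq_zero_or_pos with rfl | hk
    · simp [c, r]
    have hφ : k < φ k := Nat.lt_mul_div_succ k hn
    rw [← EReal.coe_mul, EReal.coe_le_coe_iff, div_mul_div_cancel₀ (by positivity)]
    exact div_le_div_of_nonneg_right (ha hφ.le) k.cast_nonneg
  have hr : Tendsto (fun k => (r k : EReal)) atTop (𝓝 1) :=
    EReal.tendsto_coe.2 (tendsto_natCast_mul_div_add_one_div hn)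
  have hc0 : ∀ k, 0 ≤ c k := fun k => EReal.coe_nonneg.2 (div_nonneg (h0 k) k.cast_nonneg)
  calc limsup c atTop ≤ limsup (fun k => c (φ k) * (r k : EReal)) atTop :=
        limsup_le_limsup (Eventually.of_forall hc)
    _ ≤ limsup (c ∘ φ) atTop * limsup (fun k => (r k : EReal)) atTop :=
        EReal.limsup_mul_le (Frequently.of_forall fun k => hc0 (φ k))
          (Eventually.of_forall fun _ => EReal.coe_nonneg.2 (by positivity))
          (.inr (hr.limsup_eq ▸ EReal.coe_ne_top 1)) (.inr (hr.limsup_eq ▸ one_ne_zero))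
    _ = limsup (c ∘ φ) atTop := by rw [hr.limsup_eq, mul_one]
    _ ≤ limsup (c ∘ (n * ·)) atTop :=
        ((tendsto_add_atTop_nat 1).comp
          (Nat.tendsto_div_const_atTop hn.ne')).limsup_comp_le_limsup (u := c ∘ (n * ·))

theorem limsup_comp_mul_div_eq_mul_limsup_div {a : ℕ → ℝ} (ha : Monotone a) (h0 : 0 ≤ a)
    {n : ℕ} (hn : 0 < n) :
    limsup (fun m : ℕ => ((a (n * m) / m : ℝ) : EReal)) atTop
      = n * limsup (fun k : ℕ => ((a k / k : ℝ) : EReal)) atTop := by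
  have hsplit : ∀ m : ℕ, ((a (n * m) / m : ℝ) : EReal)
      = ((n : ℝ) : EReal) * ((a (n * m) / (n * m : ℕ) : ℝ) : EReal) := by
    intro m
    rw [← EReal.coe_mul, Nat.cast_mul]
    congr 1
    field_simp
  simp_rw [hsplit]
  rw [EReal.limsup_const_mul_of_nonneg_of_ne_top (by positivity) (EReal.coe_ne_top _),
    limsup_div_comp_mul_eq_limsup_div ha h0 hn]
  rfl

theorem monotone_log_natCast : Monotone fun k : ℕ => Real.log k := by
  intro a b hab
  rcases a.eq_zero_or_pos with rfl | ha
  · simpa using Real.log_natCast_nonneg b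
  · exact Real.log_le_log (by positivity) (by exact_mod_cast hab)

section Iterates

variable [TopologicalSpace M]

theorem nsIter_add (f : ℤ → M ≃ₜ M) (i : ℤ) (a b : ℕ) (x : M) :
    nsIter f i (a + b) x = nsIter f (i + a) b (nsIter f i a x) := by
  induction b with
  | zero => rfl
  | succ b ih =>
    change f (i + ↑(a + b)) (nsIter f i (a + b) x) = f (i + a + b) (nsIter f (i + a) b _)
    rw [ih, Nat.cast_add, add_assoc]

theorem continuous_nsIter (f : ℤ → M ≃ₜ M) (i : ℤ) (k : ℕ) : Continuous (nsIter f i k) := by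
  induction k with
  | zero => exact continuous_id
  | succ k ih => exact (f (i + k)).continuous.comp ih

theorem nsIter_of_gathering {f g : ℤ → M ≃ₜ M} {n : ℕ}
    (hg : ∀ i x, g i x = nsIter f (n * i) n x) (i : ℤ) (m : ℕ) (x : M) :
    nsIter g i m x = nsIter f (n * i) (n * m) x := by
  induction m with
  | zero => rfl
  | succ m ih =>
    change g (i + m) (nsIter g i m x) = _
    rw [hg, ih, mul_add_one, nsIter_add, mul_add, Nat.cast_mul]

end Iterates

section Spanning

variable [PseudoMetricSpace M] {f g : ℤ → M ≃ₜ M} {i : ℤ} {K : Set M} {ε : ℝ}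

theorem exists_dist_nsIter_lt
    (hequi : ∀ ε > (0 : ℝ), ∃ δ > (0 : ℝ), ∀ i : ℤ, ∀ x y : M,
      dist x y < δ → dist (f i x) (f i y) < ε)
    (N : ℕ) (hε : 0 < ε) :
    ∃ δ > (0 : ℝ), ∀ j, ∀ k ≤ N, ∀ x y, dist x y < δ →
      dist (nsIter f j k x) (nsIter f j k y) < ε := by
  induction N generalizing ε with
  | zero => exact ⟨ε, hε, fun j k hk x y hxy => by rwa [Nat.le_zero.1 hk]⟩
  | succ N ih =>
    obtain ⟨η, hη, hlast⟩ := hequi ε hε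
    obtain ⟨δ, hδ, hfirst⟩ := ih (lt_min hε hη)
    refine ⟨δ, hδ, fun j k hk x y hxy => ?_⟩
    rcases Nat.of_le_succ hk with hk | rfl
    · exact (hfirst j k hk x y hxy).trans_le (min_le_left _ _)
    · exact hlast _ _ _ ((hfirst j N le_rfl x y hxy).trans_le (min_le_right _ _))

theorem IsSpanningSet.mono_length {k l : ℕ} (h : IsSpanningSet f i l ε K) (hkl : k ≤ l) :
    IsSpanningSet f i k ε K := fun x =>
  let ⟨y, hy, hd⟩ := h x
  ⟨y, hy, fun j hj => hd j (hj.trans_le hkl)⟩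

theorem IsSpanningSet.gathering {n m : ℕ} (hn : 0 < n)
    (hg : ∀ i x, g i x = nsIter f (n * i) n x)
    (h : IsSpanningSet f (n * i) (n * m) ε K) : IsSpanningSet g i m ε K := by
  intro x
  obtain ⟨y, hy, hd⟩ := h x
  refine ⟨y, hy, fun j hj => ?_⟩
  rw [nsIter_of_gathering hg, nsIter_of_gathering hg]
  exact hd (n * j) ((Nat.mul_lt_mul_left hn).2 hj)

theorem IsSpanningSet.of_gathering {n m : ℕ} {δ : ℝ} (hg : ∀ i x, g i x = nsIter f (n * i) n x)
    (hδ : ∀ j, ∀ k < n, ∀ x y, dist x y < δ → dist (nsIter f j k x) (nsIter f j k y) < ε)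
    (h : IsSpanningSet g i m δ K) : IsSpanningSet f (n * i) (n * m) ε K := by
  intro x
  obtain ⟨y, hy, hd⟩ := h x
  refine ⟨y, hy, fun t ht => ?_⟩
  have hn : 0 < n := Nat.pos_of_mul_pos_right (Nat.zero_lt_of_lt ht)
  have hsplit : ∀ z, nsIter f (n * i) t z
      = nsIter f (n * i + ↑(n * (t / n))) (t % n) (nsIter g i (t / n) z) := fun z => by
    rw [nsIter_of_gathering hg, ← nsIter_add, Nat.div_add_mod]
  rw [hsplit, hsplit]
  exact hδ _ _ (Nat.mod_lt t hn) _ _ (hd _ (Nat.div_lt_of_lt_mul ht))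

end Spanning

section Compact

variable [PseudoMetricSpace M] [CompactSpace M] {f g : ℤ → M ≃ₜ M} {i j : ℤ} {k l : ℕ}
  {ε δ : ℝ}

variable (f i k) in
theorem exists_finset_isSpanningSet (hε : 0 < ε) :
    ∃ K : Finset M, IsSpanningSet f i k ε K := by
  have hnhds : ∀ y : M, {x | ∀ j < k, dist (nsIter f i j x) (nsIter f i j y) < ε} ∈ 𝓝 y := by
    intro y
    refine (eventually_all_finite (finite_lt_nat k)).2 fun j _ => ?_
    exact (continuous_nsIter f i j).continuousAt.eventually (Metric.ball_mem_nhds _ hε)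
  obtain ⟨K, -, hcover⟩ := isCompact_univ.elim_nhds_subcover _ fun y _ => hnhds y
  refine ⟨K, fun x => ?_⟩
  obtain ⟨y, hy, hxy⟩ := mem_iUnion₂.1 (hcover (mem_univ x))
  exact ⟨y, hy, hxy⟩

theorem rSpan_le_rSpan_of_isSpanningSet_imp (hδ : 0 < δ)
    (h : ∀ K : Set M, IsSpanningSet f j l δ K → IsSpanningSet g i k ε K) :
    rSpan g i k ε ≤ rSpan f j l δ := by
  obtain ⟨K, hK⟩ := exists_finset_isSpanningSet f j l hδ
  obtain ⟨K', hcard, hK'⟩ :=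
    Nat.sInf_mem (s := {k | ∃ K : Finset M, K.card = k ∧ IsSpanningSet f j l δ K})
      ⟨_, K, rfl, hK⟩
  calc rSpan g i k ε ≤ K'.card := Nat.sInf_le ⟨K', rfl, h _ hK'⟩
    _ = rSpan f j l δ := hcard

theorem rSpan_mono_length (hε : 0 < ε) (hkl : k ≤ l) : rSpan f i k ε ≤ rSpan f i l ε :=
  rSpan_le_rSpan_of_isSpanningSet_imp hε fun _ hK => hK.mono_length hkl

variable (f i) in
theorem monotone_log_rSpan (hε : 0 < ε) :
    Monotone fun k => Real.log (rSpan f i k ε) :=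
  monotone_log_natCast.comp fun _ _ hkl => rSpan_mono_length hε hkl

theorem rGrowth_eq_limsup_comp_mul {n : ℕ} (hn : 0 < n) (hε : 0 < ε) :
    n * rGrowth f i ε
      = limsup (fun m : ℕ => ((Real.log (rSpan f i (n * m) ε) / m : ℝ) : EReal)) atTop :=
  (limsup_comp_mul_div_eq_mul_limsup_div (monotone_log_rSpan f i hε)
    (fun _ => Real.log_natCast_nonneg _) hn).symm

theorem rGrowth_gathering_le {n : ℕ} (hn : 0 < n) (hg : ∀ i x, g i x = nsIter f (n * i) n x)
    (hε : 0 < ε) : rGrowth g i ε ≤ n * rGrowth f (n * i) ε := by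
  rw [rGrowth_eq_limsup_comp_mul hn hε]
  refine limsup_le_limsup (Eventually.of_forall fun m => ?_)
  refine EReal.coe_le_coe_iff.2 <|
    div_le_div_of_nonneg_right (monotone_log_natCast ?_) m.cast_nonneg
  exact rSpan_le_rSpan_of_isSpanningSet_imp hε fun _ hK => hK.gathering hn hg

theorem le_rGrowth_gathering {n : ℕ} (hn : 0 < n) (hg : ∀ i x, g i x = nsIter f (n * i) n x)
    (hε : 0 < ε) (hδ : 0 < δ)
    (hcont : ∀ j, ∀ k < n, ∀ x y, dist x y < δ → dist (nsIter f j k x) (nsIter f j k y) < ε) :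
    n * rGrowth f (n * i) ε ≤ rGrowth g i δ := by
  rw [rGrowth_eq_limsup_comp_mul hn hε]
  refine limsup_le_limsup (Eventually.of_forall fun m => ?_)
  refine EReal.coe_le_coe_iff.2 <|
    div_le_div_of_nonneg_right (monotone_log_natCast ?_) m.cast_nonneg
  exact rSpan_le_rSpan_of_isSpanningSet_imp hδ fun _ hK => hK.of_gathering hg hcont

end Compact

/-- if the family `(f_i)_{i ∈ ℤ}` is uniformly equicontinuous and `g` is the
gathering `g_i = f_{n(i+1)-1} ∘ ⋯ ∘ f_{ni+1} ∘ f_{ni}` (i.e. `g_i = f_{ni}^n`) for a fixed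
`n ≥ 1`, then `H_i(g) = n · H_{ni}(f)` for every `i ∈ ℤ`. -/
theorem nsEntropy_gathering [MetricSpace M] [CompactSpace M]
    (f : ℤ → M ≃ₜ M)
    (hequi : ∀ ε > (0 : ℝ), ∃ δ > (0 : ℝ), ∀ i : ℤ, ∀ x y : M,
      dist x y < δ → dist (f i x) (f i y) < ε)
    (n : ℕ) (hn : 1 ≤ n) (g : ℤ → M ≃ₜ M)
    (hg : ∀ i : ℤ, ∀ x : M, g i x = nsIter f ((n : ℤ) * i) n x)
    (i : ℤ) : nsEntropy g i = (n : EReal) * nsEntropy f ((n : ℤ) * i) := by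
  have hn0 : (0 : EReal) < n := by exact_mod_cast hn
  have hntop : (n : EReal) ≠ ⊤ := EReal.natCast_ne_top n
  apply le_antisymm
  · refine iSup₂_le fun ε hε => (rGrowth_gathering_le hn hg hε).trans ?_
    exact mul_le_mul_of_nonneg_left (le_iSup₂ (f := fun ε _ => rGrowth f _ ε) ε hε) hn0.le
  · rw [mul_comm, ← EReal.le_div_iff_mul_le hn0 hntop]
    refine iSup₂_le fun ε hε => ?_
    obtain ⟨δ, hδ, hcont⟩ := exists_dist_nsIter_lt hequi (n - 1) hε
    rw [EReal.le_div_iff_mul_le hn0 hntop, mul_comm]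
    exact (le_rGrowth_gathering hn hg hε hδ fun j k hk => hcont j k (by omega)).trans
      (le_iSup₂ (f := fun δ _ => rGrowth g i δ) δ hδ)
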